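/- arXiv:1204.1924 — 3 statements merged into one kernel-verified Lean document; each statement's English description precedes it below -/
import Mathlib

section
/- Naïve fixed-frame strategy: For every integer b ≥ 1, setting F = 2^b, the rate pair (R_1, R_2) = (log₂(F)/(2F), log₂(F)/(2F)), whose sum-rate is R_1 + R_2 = log₂(F)/F bits per channel use, is achievable with U = 1 energy unit. -/
open scoped BigOperators

namespace TwoWayEnergy

/-- Transcript of the first `i` channel uses: `(transcript f1 f2 i).1` is the list of
symbols sent by Node 1 (of length `i`), and `.2` those sent by Node 2, when Node `j`
uses the strategy `fj : List Bool → Bool` mapping its past received symbols to its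
currently transmitted symbol. -/
def transcript (f1 f2 : List Bool → Bool) : ℕ → List Bool × List Bool
  | 0 => ([], [])
  | i + 1 =>
      let p := transcript f1 f2 i
      (p.1 ++ [f1 p.2], p.2 ++ [f2 p.1])

/-- Symbol transmitted by Node 1 at channel use `i` (0-indexed); `true` = "1". -/
def X1 (f1 f2 : List Bool → Bool) (i : ℕ) : Bool := f1 (transcript f1 f2 i).2

/-- Symbol transmitted by Node 2 at channel use `i` (0-indexed); `true` = "1". -/
def X2 (f1 f2 : List Bool → Bool) (i : ℕ) : Bool := f2 (transcript f1 f2 i).1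

/-- Number of energy units held by Node 1 just before channel use `i`,
starting from the initial state `u`: transmitting a "1" costs one unit and
receiving a "1" harvests one unit. -/
def state (f1 f2 : List Bool → Bool) (u : ℤ) : ℕ → ℤ
  | 0 => u
  | i + 1 => state f1 f2 u i - (if X1 f1 f2 i then 1 else 0) + (if X2 f1 f2 i then 1 else 0)

/-- Number of messages of a rate-`R` blocklength-`n` code. -/
noncomputable def msgCount (n : ℕ) (R : ℝ) : ℕ := ⌈(2 : ℝ) ^ ((n : ℝ) * R)⌉₊

/-- An `(n, R1, R2, U)` code for the two-way noiseless binary channel with energy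
exchange: encoders map (own message, initial state, past received symbols) to the
current symbol, subject to the energy constraints (a node holding no energy must send
"0"); decoders map (received sequence, own message, initial state) to an estimate of
the other message, and must be correct for every message pair and initial state. -/
structure Code (n : ℕ) (R1 R2 : ℝ) (U : ℕ) where
  f1 : Fin (msgCount n R1) → ℕ → List Bool → Bool
  f2 : Fin (msgCount n R2) → ℕ → List Bool → Bool
  g1 : (Fin n → Bool) → Fin (msgCount n R1) → ℕ → Fin (msgCount n R2)
  g2 : (Fin n → Bool) → Fin (msgCount n R2) → ℕ → Fin (msgCount n R1)
  energy1 : ∀ m1 m2 u, u ≤ U → ∀ i < n,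
    state (f1 m1 u) (f2 m2 u) (u : ℤ) i = 0 → X1 (f1 m1 u) (f2 m2 u) i = false
  energy2 : ∀ m1 m2 u, u ≤ U → ∀ i < n,
    state (f1 m1 u) (f2 m2 u) (u : ℤ) i = (U : ℤ) → X2 (f1 m1 u) (f2 m2 u) i = false
  decode1 : ∀ m1 m2 u, u ≤ U →
    g1 (fun i : Fin n => X2 (f1 m1 u) (f2 m2 u) (i : ℕ)) m1 u = m2
  decode2 : ∀ m1 m2 u, u ≤ U →
    g2 (fun i : Fin n => X1 (f1 m1 u) (f2 m2 u) (i : ℕ)) m2 u = m1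

/-- A rate pair of nonnegative reals is achievable with `U` energy units if codes
exist for all sufficiently large blocklengths. -/
def Achievable (U : ℕ) (R1 R2 : ℝ) : Prop :=
  0 ≤ R1 ∧ 0 ≤ R2 ∧ ∃ n0 : ℕ, ∀ n : ℕ, n0 ≤ n → Nonempty (Code n R1 R2 U)

/-- The capacity region `C(U)`: closure of the set of achievable rate pairs. -/
def CapacityRegion (U : ℕ) : Set (ℝ × ℝ) :=
  closure {rs : ℝ × ℝ | Achievable U rs.1 rs.2}

/-- Binary entropy function (base-2 logarithm), with `H(0) = H(1) = 0`. -/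
noncomputable def binEnt (p : ℝ) : ℝ :=
  -(p * Real.logb 2 p) - (1 - p) * Real.logb 2 (1 - p)

/-!
With a single energy unit, the node holding it can send exactly one `1` in a frame of three
channel uses, which hands the unit to the other node. So the two nodes own alternate frames,
and the position of the pulse in a frame carries a ternary digit: each node gets `log₂ 3 / 6`
bits per use. Frames of length `F = 2^b` would reach the rate `log₂ F / (2F)` only up to
rounding at each blocklength; frames of length three leave room, as
`log₂ F / (2F) ≤ 1/4 < log₂ 3 / 6`.
-/

def openLoop (e : ℕ → Bool) : List Bool → Bool := fun h => e h.length

lemma transcript_length (f1 f2 : List Bool → Bool) (i : ℕ) :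
    (transcript f1 f2 i).1.length = i ∧ (transcript f1 f2 i).2.length = i := by
  induction i with
  | zero => simp [transcript]
  | succ i ih => simp [transcript, ih.1, ih.2]

@[simp]
lemma X1_openLoop (e1 e2 : ℕ → Bool) (i : ℕ) : X1 (openLoop e1) (openLoop e2) i = e1 i := by
  rw [X1, openLoop, (transcript_length _ _ i).2]

@[simp]
lemma X2_openLoop (e1 e2 : ℕ → Bool) (i : ℕ) : X2 (openLoop e1) (openLoop e2) i = e2 i := by
  rw [X2, openLoop, (transcript_length _ _ i).1]

lemma msgCount_pos (n : ℕ) (R : ℝ) : 0 < msgCount n R :=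
  Nat.ceil_pos.mpr (Real.rpow_pos_of_pos two_pos _)

instance (n : ℕ) (R : ℝ) : Nonempty (Fin (msgCount n R)) := ⟨⟨0, msgCount_pos n R⟩⟩

lemma nonempty_code_of_openLoop {n U : ℕ} {R1 R2 : ℝ}
    (e1 : Fin (msgCount n R1) → ℕ → ℕ → Bool) (e2 : Fin (msgCount n R2) → ℕ → ℕ → Bool)
    (energy1 : ∀ m1 m2 u, u ≤ U → ∀ i < n,
      state (openLoop (e1 m1 u)) (openLoop (e2 m2 u)) (u : ℤ) i = 0 → e1 m1 u i = false)
    (energy2 : ∀ m1 m2 u, u ≤ U → ∀ i < n,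
      state (openLoop (e1 m1 u)) (openLoop (e2 m2 u)) (u : ℤ) i = U → e2 m2 u i = false)
    (inj1 : ∀ u ≤ U, Function.Injective fun m1 (i : Fin n) => e1 m1 u i)
    (inj2 : ∀ u ≤ U, Function.Injective fun m2 (i : Fin n) => e2 m2 u i) :
    Nonempty (Code n R1 R2 U) :=
  ⟨{ f1 := fun m1 u => openLoop (e1 m1 u)
     f2 := fun m2 u => openLoop (e2 m2 u)
     g1 := fun x _ u => Function.invFun (fun m2 (i : Fin n) => e2 m2 u i) x
     g2 := fun x _ u => Function.invFun (fun m1 (i : Fin n) => e1 m1 u i) x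
     energy1 := fun m1 m2 u hu i hi h => by simpa using energy1 m1 m2 u hu i hi h
     energy2 := fun m1 m2 u hu i hi h => by simpa using energy2 m1 m2 u hu i hi h
     decode1 := fun _ m2 u hu => by simpa using Function.leftInverse_invFun (inj2 u hu) m2
     decode2 := fun m1 _ u hu => by simpa using Function.leftInverse_invFun (inj1 u hu) m1 }⟩

lemma eq_of_forall_div_pow_mod_eq {b K a c : ℕ} (ha : a < b ^ K) (hc : c < b ^ K)
    (h : ∀ k < K, a / b ^ k % b = c / b ^ k % b) : a = c := by
  have := finFunctionFinEquiv.symm.injective (a₁ := ⟨a, ha⟩) (a₂ := ⟨c, hc⟩) <| funext fun k =>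
    Fin.ext <| by simpa [finFunctionFinEquiv_symm_apply_val] using h k k.isLt
  exact congrArg Fin.val this

def ternaryDigit (m k : ℕ) : Fin 3 := ⟨m / 3 ^ k % 3, Nat.mod_lt _ three_pos⟩

/-- Frame `t` (uses `3t, 3t+1, 3t+2`) belongs to node 1 if `t + u` is odd, to node 2 otherwise;
in its frames node `p` sends one `1`, at the position given by digit `t / 2` of its word `w`. -/
def framePulse (p u : ℕ) (w : ℕ → Fin 3) (i : ℕ) : Bool :=
  decide ((i / 3 + u) % 2 = p ∧ i % 3 = w (i / 6))

lemma state_framePulse {u : ℕ} (hu : u ≤ 1) (w1 w2 : ℕ → Fin 3) (i : ℕ) :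
    state (openLoop (framePulse 1 u w1)) (openLoop (framePulse 0 u w2)) u i =
      if (i / 3 + u) % 2 = 1 then (if i % 3 ≤ w1 (i / 6) then 1 else 0)
      else (if i % 3 ≤ w2 (i / 6) then 0 else 1) := by
  induction i with
  | zero => interval_cases u <;> simp [state]
  | succ i ih =>
    have := (w1 (i / 6)).isLt
    have := (w2 (i / 6)).isLt
    rw [state, ih, X1_openLoop, X2_openLoop]
    unfold framePulse
    rcases (by omega : (i + 1) / 6 = i / 6 ∨ (i + 1) % 3 = 0) with h | h
    · rw [h]
      simp only [decide_eq_true_eq]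
      split_ifs <;> omega
    · simp only [h, Nat.zero_le, if_true, decide_eq_true_eq]
      split_ifs <;> omega

lemma state_eq_one_of_framePulse_one {u : ℕ} (hu : u ≤ 1) {w1 : ℕ → Fin 3} (w2 : ℕ → Fin 3)
    {i : ℕ} (h : framePulse 1 u w1 i = true) :
    state (openLoop (framePulse 1 u w1)) (openLoop (framePulse 0 u w2)) u i = 1 := by
  simp only [framePulse, decide_eq_true_eq] at h
  simp [state_framePulse hu, h]

lemma state_eq_zero_of_framePulse_zero {u : ℕ} (hu : u ≤ 1) (w1 : ℕ → Fin 3) {w2 : ℕ → Fin 3}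
    {i : ℕ} (h : framePulse 0 u w2 i = true) :
    state (openLoop (framePulse 1 u w1)) (openLoop (framePulse 0 u w2)) u i = 0 := by
  simp only [framePulse, decide_eq_true_eq] at h
  simp [state_framePulse hu, h]

/-- Digit `k` of the word is sent in frame `2k + (p + u) % 2`, within the first `6K` uses. -/
lemma digits_eq_of_framePulse_eq {p u K : ℕ} (hp : p ≤ 1) {w w' : ℕ → Fin 3}
    (h : ∀ i < 6 * K, framePulse p u w i = framePulse p u w' i) : ∀ k < K, w k = w' k := by
  intro k hk
  have := (w k).isLt
  have hpulse := h (3 * (2 * k + (p + u) % 2) + w k) (by omega)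
  simp only [framePulse, decide_eq_decide] at hpulse
  have h6 : (3 * (2 * k + (p + u) % 2) + w k) / 6 = k := by omega
  have h3 : (3 * (2 * k + (p + u) % 2) + w k) / 3 = 2 * k + (p + u) % 2 := by omega
  rw [h6, h3] at hpulse
  exact Fin.ext (by omega)

lemma eight_mul_eight_pow_le_nine_pow {q : ℕ} (hq : 18 ≤ q) : 8 * 8 ^ q ≤ 9 ^ q := by
  induction q, hq using Nat.le_induction with
  | base => norm_num
  | succ q _ ih => rw [pow_succ, pow_succ, ← mul_assoc]; exact Nat.mul_le_mul ih (by norm_num)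

lemma msgCount_le_three_pow {n : ℕ} {R : ℝ} (hR : R ≤ 1 / 4) (hn : 216 ≤ n) :
    msgCount n R ≤ 3 ^ (n / 6) := by
  set q := n / 12
  have hexp : (n : ℝ) * R ≤ ((3 * q + 3 : ℕ) : ℝ) := by
    have : (n : ℝ) ≤ 4 * (3 * q + 3 : ℕ) := by exact_mod_cast (by omega : n ≤ 4 * (3 * q + 3))
    nlinarith [(Nat.cast_nonneg n : (0 : ℝ) ≤ n)]
  have hpow : 2 ^ (3 * q + 3) ≤ 3 ^ (n / 6) :=
    calc 2 ^ (3 * q + 3) = 8 * 8 ^ q := by rw [pow_add, pow_mul]; ring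
      _ ≤ 9 ^ q := eight_mul_eight_pow_le_nine_pow (by omega)
      _ = 3 ^ (2 * q) := by rw [pow_mul]; norm_num
      _ ≤ 3 ^ (n / 6) := Nat.pow_le_pow_right three_pos (by omega)
  refine Nat.ceil_le.mpr ?_
  calc (2 : ℝ) ^ ((n : ℝ) * R) ≤ (2 : ℝ) ^ ((3 * q + 3 : ℕ) : ℝ) :=
        Real.rpow_le_rpow_of_exponent_le one_le_two hexp
    _ = ((2 ^ (3 * q + 3) : ℕ) : ℝ) := by rw [Real.rpow_natCast]; push_cast; rfl
    _ ≤ (3 ^ (n / 6) : ℕ) := by exact_mod_cast hpow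

lemma framePulse_ternaryDigit_injective {n M : ℕ} (hM : M ≤ 3 ^ (n / 6)) {p : ℕ} (hp : p ≤ 1)
    (u : ℕ) : Function.Injective fun (m : Fin M) (i : Fin n) => framePulse p u (ternaryDigit m) i :=
  fun a c hac => Fin.ext <| eq_of_forall_div_pow_mod_eq (a.isLt.trans_le hM) (c.isLt.trans_le hM)
    fun k hk => congrArg Fin.val <| digits_eq_of_framePulse_eq hp
      (fun i hi => congrFun hac ⟨i, by omega⟩) k hk

lemma nonempty_code_of_le_quarter {n : ℕ} {R1 R2 : ℝ} (hR1 : R1 ≤ 1 / 4) (hR2 : R2 ≤ 1 / 4)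
    (hn : 216 ≤ n) : Nonempty (Code n R1 R2 1) :=
  nonempty_code_of_openLoop (fun m1 u => framePulse 1 u (ternaryDigit m1))
    (fun m2 u => framePulse 0 u (ternaryDigit m2))
    (fun _ _ _ hu _ _ h0 => Bool.eq_false_iff.mpr fun h1 => by
      simp [state_eq_one_of_framePulse_one hu _ h1] at h0)
    (fun _ _ _ hu _ _ h1 => Bool.eq_false_iff.mpr fun h0 => by
      simp [state_eq_zero_of_framePulse_zero hu _ h0] at h1)
    (fun u _ => framePulse_ternaryDigit_injective (msgCount_le_three_pow hR1 hn) le_rfl u)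
    (fun u _ => framePulse_ternaryDigit_injective (msgCount_le_three_pow hR2 hn) zero_le_one u)

lemma achievable_one_of_le_quarter {R1 R2 : ℝ} (hR1 : 0 ≤ R1) (hR1' : R1 ≤ 1 / 4)
    (hR2 : 0 ≤ R2) (hR2' : R2 ≤ 1 / 4) : Achievable 1 R1 R2 :=
  ⟨hR1, hR2, 216, fun _ hn => nonempty_code_of_le_quarter hR1' hR2' hn⟩

lemma two_mul_le_two_pow (b : ℕ) : 2 * b ≤ 2 ^ b := by
  induction b with
  | zero => norm_num
  | succ b ih => rw [pow_succ]; have := Nat.one_le_two_pow (n := b); omega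

lemma logb_two_pow_div_le_quarter (b : ℕ) :
    Real.logb 2 ((2 : ℝ) ^ b) / (2 * (2 : ℝ) ^ b) ≤ 1 / 4 := by
  rw [Real.logb_pow, Real.logb_self_eq_one one_lt_two, mul_one,
    div_le_div_iff₀ (by positivity) four_pos]
  have : (2 * b : ℝ) ≤ 2 ^ b := by exact_mod_cast two_mul_le_two_pow b
  linarith

theorem naive_frame_strategy_general (b : ℕ) :
    Real.logb 2 ((2 : ℝ) ^ b) / (2 * (2 : ℝ) ^ b)
        + Real.logb 2 ((2 : ℝ) ^ b) / (2 * (2 : ℝ) ^ b)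
      = Real.logb 2 ((2 : ℝ) ^ b) / (2 : ℝ) ^ b ∧
    Achievable 1 (Real.logb 2 ((2 : ℝ) ^ b) / (2 * (2 : ℝ) ^ b))
      (Real.logb 2 ((2 : ℝ) ^ b) / (2 * (2 : ℝ) ^ b)) := by
  have hnonneg : 0 ≤ Real.logb 2 ((2 : ℝ) ^ b) / (2 * (2 : ℝ) ^ b) := by
    rw [Real.logb_pow, Real.logb_self_eq_one one_lt_two]
    positivity
  have hle := logb_two_pow_div_le_quarter b
  exact ⟨by ring, achievable_one_of_le_quarter hnonneg hle hnonneg hle⟩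

/-- **Naïve fixed-frame strategy.** For every frame size `F = 2^b` with `b ≥ 1`, the
symmetric rate pair `(log₂ F / (2F), log₂ F / (2F))`, whose sum-rate is `log₂ F / F`
bits per channel use, is achievable with `U = 1` energy unit. -/
theorem naive_frame_strategy (b : ℕ) (hb : 1 ≤ b) :
    Real.logb 2 ((2 : ℝ) ^ b) / (2 * (2 : ℝ) ^ b)
        + Real.logb 2 ((2 : ℝ) ^ b) / (2 * (2 : ℝ) ^ b)
      = Real.logb 2 ((2 : ℝ) ^ b) / (2 : ℝ) ^ b ∧
    Achievable 1 (Real.logb 2 ((2 : ℝ) ^ b) / (2 * (2 : ℝ) ^ b))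
      (Real.logb 2 ((2 : ℝ) ^ b) / (2 * (2 : ℝ) ^ b)) :=
  naive_frame_strategy_general b

end TwoWayEnergy
end

section
/- Variable-length (interruptible-frame) strategy: The rate pair (R_1, R_2) = (1/3, 1/3), whose sum-rate is R_1 + R_2 = 2/3 bits per channel use, is achievable with U = 1 energy unit. -/
open scoped BigOperators

namespace TwoWayEnergy

/-!
With a single energy unit, only the node holding it can send a "1", and doing so hands the unit
over. So the holder can signal one bit per channel use, "keep" or "pass", while the other node
listens. If the holder has `p + q` messages and the other node `B`, the holder announces whether
its message is among the first `p`: then it keeps the unit and a scheme of length `n` for `p` and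
`B` messages finishes the job, or else it passes the unit and a scheme of length `n` with the roles
reversed, `B` messages for the new holder and `q` for the other, does. Three such steps double
both message counts, so each node gets rate `1/3` once schemes with at least `2 ^ (n / 3)`
messages are exhibited at lengths 6, 7 and 8 (with the help of the Fibonacci growth of one-way
schemes). Energy is conserved, so when Node 2 starts with the unit the roles are simply swapped.
-/

def branch (x : Bool) (f₀ f₁ : List Bool → Bool) : List Bool → Bool
  | [] => x
  | c :: s => cond c f₁ f₀ s

section Transcript

variable (f g : List Bool → Bool)

theorem transcript_swap (i : ℕ) :
    transcript f g i = ((transcript g f i).2, (transcript g f i).1) := by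
  induction i with
  | zero => rfl
  | succ i ih => simp only [transcript, ih]

theorem X1_swap (i : ℕ) : X1 f g i = X2 g f i := by
  simp only [X1, X2, transcript_swap f g i]

theorem X2_swap (i : ℕ) : X2 f g i = X1 g f i := by
  simp only [X1, X2, transcript_swap f g i]

theorem state_add_state_swap (u v : ℤ) (i : ℕ) : state f g u i + state g f v i = u + v := by
  induction i with
  | zero => rfl
  | succ i ih =>
    simp only [state, X1_swap f g i, X2_swap f g i]
    split_ifs <;> omega

theorem ofFn_X1 (n : ℕ) : List.ofFn (fun i : Fin n => X1 f g i) = (transcript f g n).1 := by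
  induction n with
  | zero => rfl
  | succ n ih =>
    rw [List.ofFn_succ_last]
    simp only [Fin.val_castSucc, Fin.val_last, ih]
    rfl

theorem ofFn_X2 (n : ℕ) : List.ofFn (fun i : Fin n => X2 f g i) = (transcript f g n).2 := by
  induction n with
  | zero => rfl
  | succ n ih =>
    rw [List.ofFn_succ_last]
    simp only [Fin.val_castSucc, Fin.val_last, ih]
    rfl

end Transcript

section Branch

variable {x₁ x₂ : Bool} {f₀ f₁ g₀ g₁ : List Bool → Bool}

theorem transcript_branch (i : ℕ) :
    transcript (branch x₁ f₀ f₁) (branch x₂ g₀ g₁) (i + 1) =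
      (x₁ :: (transcript (cond x₂ f₁ f₀) (cond x₁ g₁ g₀) i).1,
        x₂ :: (transcript (cond x₂ f₁ f₀) (cond x₁ g₁ g₀) i).2) := by
  induction i with
  | zero => rfl
  | succ i ih =>
    rw [transcript, ih]
    simp [transcript, branch]

theorem X1_branch (i : ℕ) :
    X1 (branch x₁ f₀ f₁) (branch x₂ g₀ g₁) (i + 1) = X1 (cond x₂ f₁ f₀) (cond x₁ g₁ g₀) i := by
  simp [X1, transcript_branch, branch]

theorem X2_branch (i : ℕ) :
    X2 (branch x₁ f₀ f₁) (branch x₂ g₀ g₁) (i + 1) = X2 (cond x₂ f₁ f₀) (cond x₁ g₁ g₀) i := by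
  simp [X2, transcript_branch, branch]

theorem state_branch (u : ℤ) (i : ℕ) :
    state (branch x₁ f₀ f₁) (branch x₂ g₀ g₁) u (i + 1) =
      state (cond x₂ f₁ f₀) (cond x₁ g₁ g₀)
        (u - (if x₁ then 1 else 0) + (if x₂ then 1 else 0)) i := by
  induction i with
  | zero => rfl
  | succ i ih => rw [state, ih, X1_branch, X2_branch, state]

end Branch

def EnergyFeasible (n : ℕ) (U u : ℤ) (f g : List Bool → Bool) : Prop :=
  ∀ i < n, (state f g u i = 0 → X1 f g i = false) ∧ (state f g u i = U → X2 f g i = false)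

namespace EnergyFeasible

variable {n : ℕ} {U u : ℤ} {f g : List Bool → Bool}

theorem swap (h : EnergyFeasible n U u f g) : EnergyFeasible n U (U - u) g f := by
  intro i hi
  have hsum := state_add_state_swap f g u (U - u) i
  rw [X1_swap g f, X2_swap g f]
  exact ⟨fun hs => (h i hi).2 (by omega), fun hs => (h i hi).1 (by omega)⟩

theorem branch {x₁ x₂ : Bool} {f₀ f₁ g₀ g₁ : List Bool → Bool}
    (h₁ : u = 0 → x₁ = false) (h₂ : u = U → x₂ = false)
    (h : EnergyFeasible n U (u - (if x₁ then 1 else 0) + (if x₂ then 1 else 0))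
      (cond x₂ f₁ f₀) (cond x₁ g₁ g₀)) :
    EnergyFeasible (n + 1) U u (TwoWayEnergy.branch x₁ f₀ f₁) (TwoWayEnergy.branch x₂ g₀ g₁) := by
  rintro (_ | i) hi
  · exact ⟨h₁, h₂⟩
  · rw [state_branch, X1_branch, X2_branch]
    exact h i (by omega)

end EnergyFeasible

/-- Messages are the naturals below `A` and `B`, so schemes with no messages on one side exist
trivially; this makes keeping and handing over the energy special cases of `Exchangeable.split`. -/
def IsScheme (n : ℕ) (U u : ℤ) (A B : ℕ) (e₁ e₂ : ℕ → List Bool → Bool)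
    (d₁ d₂ : List Bool → ℕ → ℕ) : Prop :=
  ∀ a < A, ∀ b < B, EnergyFeasible n U u (e₁ a) (e₂ b) ∧
    d₁ (transcript (e₁ a) (e₂ b) n).2 a = b ∧ d₂ (transcript (e₁ a) (e₂ b) n).1 b = a

theorem IsScheme.swap {n : ℕ} {U u : ℤ} {A B : ℕ} {e₁ e₂ : ℕ → List Bool → Bool}
    {d₁ d₂ : List Bool → ℕ → ℕ} (h : IsScheme n U u A B e₁ e₂ d₁ d₂) :
    IsScheme n U (U - u) B A e₂ e₁ d₂ d₁ := by
  intro b hb a ha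
  obtain ⟨hE, hd₁, hd₂⟩ := h a ha b hb
  rw [transcript_swap (e₂ b)]
  exact ⟨hE.swap, hd₂, hd₁⟩

def Exchangeable (n A B : ℕ) : Prop :=
  ∃ e₁ e₂ d₁ d₂, IsScheme n 1 1 A B e₁ e₂ d₁ d₂

namespace Exchangeable

variable {n A B : ℕ}

theorem one_one (n : ℕ) : Exchangeable n 1 1 := by
  refine ⟨fun _ _ => false, fun _ _ => false, fun _ _ => 0, fun _ _ => 0, ?_⟩
  intro a ha b hb
  exact ⟨fun _ _ => ⟨fun _ => rfl, fun _ => rfl⟩, (Nat.lt_one_iff.mp hb).symm,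
    (Nat.lt_one_iff.mp ha).symm⟩

theorem zero_left (n B : ℕ) : Exchangeable n 0 B :=
  ⟨fun _ _ => false, fun _ _ => false, fun _ _ => 0, fun _ _ => 0,
    fun a ha => absurd ha (Nat.not_lt_zero a)⟩

theorem zero_right (n A : ℕ) : Exchangeable n A 0 :=
  ⟨fun _ _ => false, fun _ _ => false, fun _ _ => 0, fun _ _ => 0,
    fun _ _ _ hb => absurd hb (Nat.not_lt_zero _)⟩

theorem mono {A' B' : ℕ} (h : Exchangeable n A B) (hA : A' ≤ A) (hB : B' ≤ B) :
    Exchangeable n A' B' := by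
  obtain ⟨e₁, e₂, d₁, d₂, h⟩ := h
  exact ⟨e₁, e₂, d₁, d₂, fun a ha b hb => h a (by omega) b (by omega)⟩

theorem split {p q : ℕ} (h₁ : Exchangeable n p B) (h₂ : Exchangeable n B q) :
    Exchangeable (n + 1) (p + q) B := by
  obtain ⟨e₁, e₂, d₁, d₂, h₁⟩ := h₁
  obtain ⟨E₁, E₂, D₁, D₂, h₂⟩ := h₂
  let k : ℕ → List Bool → Bool := fun a => if a < p then e₁ a else E₂ (a - p)
  refine ⟨fun a => branch (decide (p ≤ a)) (k a) (k a), fun b => branch false (e₂ b) (E₁ b),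
    fun y a => if a < p then d₁ y.tail a else D₂ y.tail (a - p),
    fun y b => if y.headI then p + D₁ y.tail b else d₂ y.tail b, fun a ha b hb => ?_⟩
  rcases lt_or_ge a p with hap | hpa
  · obtain ⟨hE, hd₁, hd₂⟩ := h₁ a hap b hb
    have hx : decide (p ≤ a) = false := by simpa using hap
    simp only [hx, transcript_branch, cond_false, k, if_pos hap, List.tail_cons,
      List.headI_cons, Bool.false_eq_true, if_false]
    exact ⟨.branch (by simp) (fun _ => rfl) (by simpa using hE), hd₁, hd₂⟩
  · obtain ⟨hE, hd₁, hd₂⟩ := h₂.swap (a - p) (by omega) b hb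
    have hx : decide (p ≤ a) = true := by simpa using hpa
    simp only [hx, transcript_branch, cond_true, cond_false, k, if_neg (not_lt.mpr hpa),
      List.tail_cons, List.headI_cons, if_true]
    exact ⟨.branch (by simp) (fun _ => rfl) (by simpa using hE), hd₁, by omega⟩

theorem pad (h : Exchangeable n A B) : Exchangeable (n + 1) A B :=
  h.split (zero_right n B)

theorem pass (h : Exchangeable n B A) : Exchangeable (n + 1) A B := by
  simpa using (zero_left n B).split h

theorem double (h : Exchangeable n A A) : Exchangeable (n + 3) (2 * A) (2 * A) := by
  have h₁ : Exchangeable (n + 1) (2 * A) A := by simpa [two_mul] using h.split h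
  simpa [two_mul] using h₁.pass.split h₁.pad

theorem fib : ∀ n, Exchangeable n (Nat.fib (n + 2)) 1 ∧ Exchangeable n 1 (Nat.fib (n + 1))
  | 0 => ⟨one_one 0, one_one 0⟩
  | n + 1 => by
    obtain ⟨h, h'⟩ := fib n
    refine ⟨?_, h.pass⟩
    rw [show Nat.fib (n + 3) = Nat.fib (n + 2) + Nat.fib (n + 1) from
      Nat.fib_add_two.trans (add_comm _ _)]
    exact h.split h'

theorem of_le_fib {n A : ℕ} (hA : A ≤ Nat.fib (n + 2)) : Exchangeable n A 1 :=
  (fib n).1.mono hA le_rfl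

theorem seven_six_six_and_eight_seven_seven : Exchangeable 7 6 6 ∧ Exchangeable 8 7 7 := by
  have h₃ : Exchangeable 3 2 2 := (one_one 0).double
  have h₄ : Exchangeable 4 4 2 := h₃.split h₃
  have h₄' : Exchangeable 4 2 3 :=
    (of_le_fib le_rfl : Exchangeable 2 3 1).pass.split (of_le_fib (by decide))
  have h₅ : Exchangeable 5 3 4 := (of_le_fib (by decide) : Exchangeable 3 4 1).pass.split h₄
  have h₅' : Exchangeable 5 7 2 := h₄.split h₄'
  have h₆ : Exchangeable 6 3 7 := (of_le_fib (by decide) : Exchangeable 4 7 1).pass.split h₅'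
  have h₆' : Exchangeable 6 7 3 := (h₅.mono le_rfl (by decide)).split h₅
  have h₇ : Exchangeable 7 6 7 := h₆.split h₆'
  exact ⟨h₇.mono le_rfl (by decide), h₇.split (of_le_fib (by decide))⟩

theorem exists_two_pow_le_cube : ∀ k, ∃ A, 2 ^ (k + 6) ≤ A ^ 3 ∧ Exchangeable (k + 6) A A
  | 0 => ⟨4, by norm_num, (one_one 0).double.double⟩
  | 1 => ⟨6, by norm_num, seven_six_six_and_eight_seven_seven.1⟩
  | 2 => ⟨7, by norm_num, seven_six_six_and_eight_seven_seven.2⟩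
  | k + 3 => by
    obtain ⟨A, hA, h⟩ := exists_two_pow_le_cube k
    refine ⟨2 * A, ?_, h.double⟩
    calc 2 ^ (k + 3 + 6) = 8 * 2 ^ (k + 6) := by ring
      _ ≤ 8 * A ^ 3 := by omega
      _ = (2 * A) ^ 3 := by ring

end Exchangeable

theorem msgCount_le_of_two_pow_le_pow {n k A : ℕ} (hk : k ≠ 0) (h : 2 ^ n ≤ A ^ k) :
    msgCount n (1 / k) ≤ A := by
  refine Nat.ceil_le.mpr ?_
  calc (2 : ℝ) ^ ((n : ℝ) * (1 / k)) = ((2 : ℝ) ^ n) ^ ((k : ℝ)⁻¹) := by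
        rw [one_div, Real.rpow_mul (by norm_num), Real.rpow_natCast]
    _ ≤ ((A : ℝ) ^ k) ^ ((k : ℝ)⁻¹) := by
        gcongr
        exact_mod_cast h
    _ = A := Real.pow_rpow_inv_natCast A.cast_nonneg hk

instance (n : ℕ) (R : ℝ) : NeZero (msgCount n R) :=
  ⟨(Nat.ceil_pos.mpr (by positivity)).ne'⟩

theorem Code.nonempty_of_isScheme {n U : ℕ} {R₁ R₂ : ℝ} {e₁ e₂ : ℕ → ℕ → List Bool → Bool}
    {d₁ d₂ : ℕ → List Bool → ℕ → ℕ}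
    (h : ∀ u ≤ U, IsScheme n U u (msgCount n R₁) (msgCount n R₂) (e₁ u) (e₂ u) (d₁ u) (d₂ u)) :
    Nonempty (Code n R₁ R₂ U) := by
  refine ⟨⟨fun m u => e₁ u m, fun m u => e₂ u m,
    fun y m u => Fin.ofNat _ (d₁ u (List.ofFn y) m),
    fun y m u => Fin.ofNat _ (d₂ u (List.ofFn y) m), ?_, ?_, ?_, ?_⟩⟩
  · exact fun m₁ m₂ u hu i hi => ((h u hu m₁ m₁.2 m₂ m₂.2).1 i hi).1
  · exact fun m₁ m₂ u hu i hi => ((h u hu m₁ m₁.2 m₂ m₂.2).1 i hi).2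
  · intro m₁ m₂ u hu
    ext
    rw [Fin.val_ofNat, ofFn_X2, (h u hu m₁ m₁.2 m₂ m₂.2).2.1, Nat.mod_eq_of_lt m₂.2]
  · intro m₁ m₂ u hu
    ext
    rw [Fin.val_ofNat, ofFn_X1, (h u hu m₁ m₁.2 m₂ m₂.2).2.2, Nat.mod_eq_of_lt m₁.2]

theorem Exchangeable.nonempty_code {n : ℕ} {R₁ R₂ : ℝ}
    (h₁ : Exchangeable n (msgCount n R₁) (msgCount n R₂))
    (h₂ : Exchangeable n (msgCount n R₂) (msgCount n R₁)) : Nonempty (Code n R₁ R₂ 1) := by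
  obtain ⟨e₁, e₂, d₁, d₂, h₁⟩ := h₁
  obtain ⟨E₁, E₂, D₁, D₂, h₂⟩ := h₂
  refine Code.nonempty_of_isScheme (e₁ := fun u => if u = 0 then E₂ else e₁)
    (e₂ := fun u => if u = 0 then E₁ else e₂) (d₁ := fun u => if u = 0 then D₂ else d₁)
    (d₂ := fun u => if u = 0 then D₁ else d₂) fun u hu => ?_
  interval_cases u
  · simpa using h₂.swap
  · simpa using h₁

/-- **Variable-length (interruptible-frame) strategy.** The rate pair `(1/3, 1/3)`,
whose sum-rate is `2/3` bits per channel use, is achievable with `U = 1` energy unit. -/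
theorem variable_length_strategy :
    (1 / 3 : ℝ) + 1 / 3 = 2 / 3 ∧ Achievable 1 (1 / 3 : ℝ) (1 / 3 : ℝ) := by
  refine ⟨by norm_num, by norm_num, by norm_num, 6, fun n hn => ?_⟩
  obtain ⟨A, hA, h⟩ := Exchangeable.exists_two_pow_le_cube (n - 6)
  rw [Nat.sub_add_cancel hn] at hA h
  have hM : msgCount n (1 / 3) ≤ A := by
    simpa using msgCount_le_of_two_pow_le_pow three_ne_zero hA
  exact Exchangeable.nonempty_code (h.mono hM hM) (h.mono hM hM)

end TwoWayEnergy
end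

section
/- Converse for one energy unit: Every rate pair (R_1, R_2) that is achievable with U = 1 energy unit satisfies R_1 + R_2 ≤ 1 bit per channel use. (With a single energy unit, at every channel use exactly one node holds the unit, the other node is forced to transmit '0', and hence at most one bit of information can be conveyed per channel use in total.) -/
open scoped BigOperators

namespace TwoWayEnergy

/-!
With a single energy unit the state of Node 1 stays in `{0, 1}`, and in either state one node is
forced to send `0`. Hence the OR of the two symbols sent at each channel use determines, by
induction, the state and the whole transcript, so a message pair is encoded in a binary word of
length `n`. A deterministic interactive protocol producing the same transcript on `(m₁, m₂)` and
`(m₁', m₂')` also produces it on `(m₁, m₂')`, so correct decoding makes this encoding injective,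
and `2 ^ (n (R₁ + R₂)) ≤ |M₁| |M₂| ≤ 2 ^ n`.
-/

section Transcript

variable {f1 f2 g1 g2 : List Bool → Bool}

lemma transcript_succ (f1 f2 : List Bool → Bool) (i : ℕ) :
    transcript f1 f2 (i + 1) =
      ((transcript f1 f2 i).1 ++ [X1 f1 f2 i], (transcript f1 f2 i).2 ++ [X2 f1 f2 i]) :=
  rfl

lemma state_succ (f1 f2 : List Bool → Bool) (u : ℤ) (i : ℕ) :
    state f1 f2 u (i + 1) =
      state f1 f2 u i - (if X1 f1 f2 i then 1 else 0) + (if X2 f1 f2 i then 1 else 0) :=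
  rfl

lemma transcript_eq_ofFn (f1 f2 : List Bool → Bool) (n : ℕ) :
    transcript f1 f2 n =
      (List.ofFn fun i : Fin n => X1 f1 f2 i, List.ofFn fun i : Fin n => X2 f1 f2 i) := by
  induction n with
  | zero => rfl
  | succ n ih => rw [transcript_succ, ih, List.ofFn_succ_last, List.ofFn_succ_last]; rfl

lemma transcript_eq_transcript_iff {n : ℕ} :
    transcript f1 f2 n = transcript g1 g2 n ↔
      (∀ i < n, X1 f1 f2 i = X1 g1 g2 i) ∧ ∀ i < n, X2 f1 f2 i = X2 g1 g2 i := by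
  simp only [transcript_eq_ofFn, Prod.mk.injEq, List.ofFn_inj, funext_iff, Fin.forall_iff]

/-- Interactive protocols have the rectangle property: if `(f1, f2)` and `(g1, g2)` produce the
same transcript, so does `(f1, g2)`. -/
lemma transcript_mix {n : ℕ} (h : transcript f1 f2 n = transcript g1 g2 n) :
    transcript f1 g2 n = transcript f1 f2 n := by
  have hX := transcript_eq_transcript_iff.mp h
  have hle : ∀ i ≤ n, transcript f1 f2 i = transcript g1 g2 i := fun i hi =>
    transcript_eq_transcript_iff.mpr
      ⟨fun j hj => hX.1 j (by omega), fun j hj => hX.2 j (by omega)⟩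
  suffices ∀ i ≤ n, transcript f1 g2 i = transcript f1 f2 i from this n le_rfl
  intro i hi
  induction i with
  | zero => rfl
  | succ i ih =>
    have hmix := ih (by omega)
    have hX1 : X1 f1 g2 i = X1 f1 f2 i := by simp only [X1, hmix]
    have hX2 : X2 f1 g2 i = X2 f1 f2 i := by
      rw [hX.2 i hi]
      simp only [X2, hmix, hle i (by omega)]
    rw [transcript_succ, transcript_succ, hmix, hX1, hX2]

end Transcript

structure RespectsEnergy (U : ℕ) (u : ℤ) (n : ℕ) (f1 f2 : List Bool → Bool) : Prop where
  send1 : ∀ i < n, state f1 f2 u i = 0 → X1 f1 f2 i = false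
  send2 : ∀ i < n, state f1 f2 u i = U → X2 f1 f2 i = false

namespace RespectsEnergy

variable {U n : ℕ} {u : ℤ} {f1 f2 : List Bool → Bool}

lemma state_mem_Icc (h : RespectsEnergy U u n f1 f2) (hu : u ∈ Set.Icc 0 (U : ℤ)) :
    ∀ i ≤ n, state f1 f2 u i ∈ Set.Icc 0 (U : ℤ) := by
  intro i hi
  induction i with
  | zero => exact hu
  | succ i ih =>
    obtain ⟨h0, hU⟩ := ih (by omega)
    have h1 : X1 f1 f2 i = true → state f1 f2 u i ≠ 0 := fun hx h0 => by
      simp [h.send1 i (by omega) h0] at hx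
    have h2 : X2 f1 f2 i = true → state f1 f2 u i ≠ U := fun hx hU => by
      simp [h.send2 i (by omega) hU] at hx
    rw [state_succ, Set.mem_Icc]
    revert h1 h2
    cases X1 f1 f2 i <;> cases X2 f1 f2 i <;> simp <;> omega

lemma transcript_eq_of_or_eq {g1 g2 : List Bool → Bool}
    (hf : RespectsEnergy 1 u n f1 f2) (hg : RespectsEnergy 1 u n g1 g2)
    (hu : u ∈ Set.Icc 0 1)
    (hor : ∀ i < n, (X1 f1 f2 i || X2 f1 f2 i) = (X1 g1 g2 i || X2 g1 g2 i)) :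
    transcript f1 f2 n = transcript g1 g2 n := by
  suffices ∀ i ≤ n, transcript f1 f2 i = transcript g1 g2 i ∧ state f1 f2 u i = state g1 g2 u i
    from (this n le_rfl).1
  intro i hi
  induction i with
  | zero => exact ⟨rfl, rfl⟩
  | succ i ih =>
    obtain ⟨ht, hs⟩ := ih (by omega)
    have hstate := hf.state_mem_Icc (by exact_mod_cast hu) i (by omega)
    have hX : X1 f1 f2 i = X1 g1 g2 i ∧ X2 f1 f2 i = X2 g1 g2 i := by
      have hori := hor i hi
      have hs0 : state f1 f2 u i = 0 ∨ state f1 f2 u i = 1 := by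
        simp only [Set.mem_Icc, Nat.cast_one] at hstate; omega
      rcases hs0 with hs0 | hs1
      · have hf1 := hf.send1 i hi hs0
        have hg1 := hg.send1 i hi (hs ▸ hs0)
        simp_all
      · have hf2 := hf.send2 i hi (by exact_mod_cast hs1)
        have hg2 := hg.send2 i hi (by rw [← hs]; exact_mod_cast hs1)
        simp_all
    rw [transcript_succ, transcript_succ, state_succ, state_succ, ht, hs, hX.1, hX.2]
    exact ⟨rfl, rfl⟩

end RespectsEnergy

namespace Code

variable {n U : ℕ} {R1 R2 : ℝ}

lemma respectsEnergy (C : Code n R1 R2 U) (m1 m2) {u : ℕ} (hu : u ≤ U) :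
    RespectsEnergy U u n (C.f1 m1 u) (C.f2 m2 u) :=
  ⟨C.energy1 m1 m2 u hu, C.energy2 m1 m2 u hu⟩

lemma eq_of_transcript_eq (C : Code n R1 R2 U) {u : ℕ} (hu : u ≤ U) {m1 m1' m2 m2'}
    (h : transcript (C.f1 m1 u) (C.f2 m2 u) n = transcript (C.f1 m1' u) (C.f2 m2' u) n) :
    m1 = m1' ∧ m2 = m2' := by
  have hmix := transcript_mix h
  have hX1 := (transcript_eq_transcript_iff.mp (hmix.trans h)).1
  have hX2 := (transcript_eq_transcript_iff.mp hmix).2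
  constructor
  · rw [← C.decode2 m1 m2' u hu, ← C.decode2 m1' m2' u hu]
    congr 1
    exact funext fun i => hX1 i i.isLt
  · rw [← C.decode1 m1 m2 u hu, ← C.decode1 m1 m2' u hu]
    congr 1
    exact funext fun i => (hX2 i i.isLt).symm

lemma msgCount_mul_le_of_one_unit (C : Code n R1 R2 1) :
    msgCount n R1 * msgCount n R2 ≤ 2 ^ n := by
  let orWord : Fin (msgCount n R1) × Fin (msgCount n R2) → Fin n → Bool := fun m i =>
    X1 (C.f1 m.1 1) (C.f2 m.2 1) i || X2 (C.f1 m.1 1) (C.f2 m.2 1) i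
  have hinj : Function.Injective orWord := by
    rintro ⟨m1, m2⟩ ⟨m1', m2'⟩ heq
    have ht := (C.respectsEnergy m1 m2 le_rfl).transcript_eq_of_or_eq
      (C.respectsEnergy m1' m2' le_rfl) (by norm_num) fun i hi => congrFun heq ⟨i, hi⟩
    obtain ⟨rfl, rfl⟩ := C.eq_of_transcript_eq le_rfl ht
    rfl
  simpa using Fintype.card_le_of_injective orWord hinj

end Code

lemma rpow_le_msgCount (n : ℕ) (R : ℝ) : (2 : ℝ) ^ ((n : ℝ) * R) ≤ msgCount n R :=
  Nat.le_ceil _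

lemma add_le_one_of_msgCount_mul_le {n : ℕ} {R1 R2 : ℝ} (hn : 0 < n)
    (h : msgCount n R1 * msgCount n R2 ≤ 2 ^ n) : R1 + R2 ≤ 1 := by
  have hpow : (2 : ℝ) ^ ((n : ℝ) * (R1 + R2)) ≤ (2 : ℝ) ^ ((n : ℝ) * 1) :=
    calc (2 : ℝ) ^ ((n : ℝ) * (R1 + R2))
        = (2 : ℝ) ^ ((n : ℝ) * R1) * (2 : ℝ) ^ ((n : ℝ) * R2) := by
          rw [mul_add, Real.rpow_add two_pos]
      _ ≤ msgCount n R1 * msgCount n R2 :=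
          mul_le_mul (rpow_le_msgCount n R1) (rpow_le_msgCount n R2) (by positivity)
            (Nat.cast_nonneg _)
      _ ≤ (2 : ℝ) ^ n := by exact_mod_cast h
      _ = (2 : ℝ) ^ ((n : ℝ) * 1) := by rw [mul_one, Real.rpow_natCast]
  have hn' : (0 : ℝ) < n := by exact_mod_cast hn
  exact le_of_mul_le_mul_left ((Real.rpow_le_rpow_left_iff one_lt_two).mp hpow) hn'

/-- **Converse for one energy unit.** Every rate pair achievable with `U = 1` energy
unit satisfies `R1 + R2 ≤ 1` bit per channel use. -/
theorem converse_one_unit (R1 R2 : ℝ) (h : Achievable 1 R1 R2) :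
    R1 + R2 ≤ 1 := by
  obtain ⟨-, -, n0, hcodes⟩ := h
  obtain ⟨C⟩ := hcodes (max n0 1) (le_max_left _ _)
  exact add_le_one_of_msgCount_mul_le (by omega) C.msgCount_mul_le_of_one_unit

end TwoWayEnergy
end
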